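/- Fix λ = Λ_{i₁} + ⋯ + Λ_{i_r} with i₁ ≥ i₂ ≥ ⋯ ≥ i_r, and let (μ^{(1)}, …, μ^{(r)}) be a Kleshchev multipartition, i.e., μ^{(t)}_{i_t − i_{t+1} + x} ≤ μ^{(t+1)}_x for all x ≥ 1 and 1 ≤ t ≤ r−1. If E_j of this colored multipartition (remove the j-box corresponding to the leftmost uncanceled − in the signature built from removable/addable j-boxes of the μ^{(k)}) is nonzero, then the resulting colored multipartition is again a Kleshchev multipartition. -/

import Mathlib

/-!
Removing a box from component `k` only shrinks `μ^{(k)}`, so the only Kleshchev inequalities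
that can fail are those between components `k - 1` and `k`, with shift `c = i_{k-1} - i_k`.
If one fails after removing the box from row `m` of `μ^{(k)}`, then row `c + m` of
`μ^{(k-1)}` has the same length as row `m` of `μ^{(k)}`, and its last box is removable and has
the same color `j`. Hence component `k - 1` contributes a `-` immediately to the left of the
uncanceled `-` of component `k`; that `-` cannot be canceled either, contradicting the choice
of `k` as the leftmost uncanceled `-`.
-/

/-- A partition: a weakly decreasing list of positive integers. -/
def IsPartition (μ : List ℕ) : Prop :=
  μ.Pairwise (· ≥ ·) ∧ ∀ x ∈ μ, 0 < x

/-- Remove one box from row `m` (0-indexed), deleting the row if it becomes empty. -/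
def removeBox (μ : List ℕ) (m : ℕ) : List ℕ :=
  (μ.set m (μ.getD m 0 - 1)).filter (fun x => decide (0 < x))

/-- The box at the end of row `m` (0-indexed) of `μ` colored by `i` is a removable `j`-box:
it is filled with `j` (the `(x,y)` box is filled with `i + x - y`, rows and columns 1-indexed),
and removing it yields the diagram of a partition. -/
def RemovableJBox (μ : List ℕ) (i j : ℤ) (m : ℕ) : Prop :=
  m < μ.length ∧ i + (μ.getD m 0 : ℤ) - (m + 1 : ℕ) = j ∧ IsPartition (removeBox μ m)

/-- Add a box at the end of row `m` (0-indexed); `m = μ.length` starts a new row. -/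
def addBox (μ : List ℕ) (m : ℕ) : List ℕ :=
  if m < μ.length then μ.set m (μ.getD m 0 + 1) else μ ++ [1]

/-- The position at the end of row `m` is an addable `j`-box: the added box would be filled
with `j` and adding it yields the diagram of a partition. -/
def AddableJBox (μ : List ℕ) (i j : ℤ) (m : ℕ) : Prop :=
  m ≤ μ.length ∧ i + ((μ.getD m 0 : ℤ) + 1) - (m + 1 : ℕ) = j ∧ IsPartition (addBox μ m)

instance (μ : List ℕ) (i j : ℤ) (m : ℕ) : Decidable (RemovableJBox μ i j m) := by
  unfold RemovableJBox IsPartition; infer_instance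

instance (μ : List ℕ) (i j : ℤ) (m : ℕ) : Decidable (AddableJBox μ i j m) := by
  unfold AddableJBox IsPartition; infer_instance

/-- The crystal operator `E_j` on a single partition colored by `i`: remove the (unique)
removable `j`-box if one exists, otherwise return `none` (the symbol `0`). -/
def EjPart (i j : ℤ) (μ : List ℕ) : Option (List ℕ) :=
  match (List.range μ.length).find? (fun m => decide (RemovableJBox μ i j m)) with
  | none => none
  | some m => some (removeBox μ m)
/-- Symbols of a signature word. -/
inductive PMSym | plus | minus | blank
deriving DecidableEq, Repr

/-- Signature reduction keeping positions: blanks are dropped and adjacent `-+` pairs cancel;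
the result lists the uncanceled symbols together with their positions and has the
form `+ ⋯ + - ⋯ -`. -/
def redIdx : List (ℕ × PMSym) → List (ℕ × PMSym)
  | [] => []
  | p :: xs =>
    let r := redIdx xs
    match p.2 with
    | PMSym.blank => r
    | PMSym.plus => p :: r
    | PMSym.minus =>
      match r with
      | q :: r' => if q.2 = PMSym.plus then r' else p :: r
      | [] => [p]

/-- One step of signature reduction: `(p, m) = (#uncanceled +, #uncanceled -)` so far. -/
def sigStep : ℕ × ℕ → PMSym → ℕ × ℕ
  | (p, m), PMSym.plus => if 0 < m then (p, m - 1) else (p + 1, m)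
  | (p, m), PMSym.minus => (p, m + 1)
  | (p, m), PMSym.blank => (p, m)

/-- `sig w = (φ, ε)`: the numbers of uncanceled `+` and `-` symbols of `w`. -/
def sig (w : List PMSym) : ℕ × ℕ := w.foldl sigStep (0, 0)

/-- The Kleshchev condition for a multipartition `μs` colored by
`λ = Λ_{i₁} + ⋯ + Λ_{i_r}` with `i₁ ≥ ⋯ ≥ i_r` (components and colors listed in that
order): `μ^{(t)}_{i_t - i_{t+1} + x} ≤ μ^{(t+1)}_x` for all `x ≥ 1`, `1 ≤ t ≤ r - 1`
(here rows are 0-indexed, so row `x` below corresponds to row `x + 1`). -/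
def Kleshchev (is : List ℤ) (μs : List (List ℕ)) : Prop :=
  ∀ t : ℕ, t + 1 < μs.length → ∀ x : ℕ,
    (μs.getD t []).getD ((is.getD t 0 - is.getD (t + 1) 0).toNat + x) 0
      ≤ (μs.getD (t + 1) []).getD x 0

/-- The signature symbol of a component `(μ, i)` for the letter `j`: `-` if it has a
removable `j`-box, `+` if it has an addable `j`-box, blank otherwise. -/
def symOf (j : ℤ) (p : List ℕ × ℤ) : PMSym :=
  if (List.range p.1.length).any (fun m => decide (RemovableJBox p.1 p.2 j m)) then
    PMSym.minus
  else if (List.range (p.1.length + 1)).any (fun m => decide (AddableJBox p.1 p.2 j m)) then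
    PMSym.plus
  else PMSym.blank

/-- `E_j` on a colored multipartition: remove the removable `j`-box from the component
carrying the leftmost uncanceled `-` of the signature word, or return `none` if no
uncanceled `-` exists. -/
def EjMP (j : ℤ) (is : List ℤ) (μs : List (List ℕ)) : Option (List (List ℕ)) :=
  match (redIdx (((μs.zip is).map (symOf j)).zipIdx.map Prod.swap)).find? (fun p => p.2 == PMSym.minus) with
  | none => none
  | some p =>
    match EjPart (is.getD p.1 0) j (μs.getD p.1 []) with
    | none => none
    | some ν => some (μs.set p.1 ν)

namespace List

theorem getD_set_eq_ite {α : Type*} (l : List α) (n x : ℕ) (v d : α) :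
    (l.set n v).getD x d = if n = x ∧ x < l.length then v else l.getD x d := by
  simp only [getD_eq_getElem?_getD, getElem?_set]
  split_ifs <;> simp_all

theorem getD_eraseIdx {α : Type*} (l : List α) (n x : ℕ) (d : α) :
    (l.eraseIdx n).getD x d = if x < n then l.getD x d else l.getD (x + 1) d := by
  simp only [getD_eq_getElem?_getD, getElem?_eraseIdx]
  split_ifs <;> rfl

theorem pairwise_ge_iff_antitone_getD {l : List ℕ} :
    l.Pairwise (· ≥ ·) ↔ Antitone (l.getD · 0) := by
  constructor
  · intro hl a b hab
    show l.getD b 0 ≤ l.getD a 0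
    by_cases hb : b < l.length
    · rw [getD_eq_getElem _ _ hb, getD_eq_getElem _ _ (hab.trans_lt hb)]
      rcases hab.eq_or_lt with rfl | hlt
      · rfl
      · exact pairwise_iff_getElem.1 hl a b _ hb hlt
    · rw [getD_eq_default _ _ (not_lt.1 hb)]
      exact Nat.zero_le _
  · intro h
    refine pairwise_iff_getElem.2 fun a b ha hb hab => ?_
    have : l.getD b 0 ≤ l.getD a 0 := h hab.le
    rwa [getD_eq_getElem _ _ ha, getD_eq_getElem _ _ hb] at this

theorem le_of_find?_eq_some {α : Type*} {l : List α} {f : α → ℕ} {p : α → Bool} {a b : α}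
    (hl : l.Pairwise (fun x y => f x < f y)) (ha : l.find? p = some a) (hb : b ∈ l)
    (hpb : p b) : f a ≤ f b := by
  obtain ⟨-, as, bs, rfl, has⟩ := find?_eq_some_iff_append.1 ha
  rcases mem_append.1 hb with hb | hb
  · simpa [hpb] using has b hb
  · rcases mem_cons.1 hb with rfl | hb
    · rfl
    · exact (pairwise_cons.1 (pairwise_append.1 hl).2.1).1 b hb |>.le

end List

section Partition

variable {μ : List ℕ} {m : ℕ}

lemma IsPartition.getD_pos (hμ : IsPartition μ) (hm : m < μ.length) : 0 < μ.getD m 0 := by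
  rw [List.getD_eq_getElem _ _ hm]
  exact hμ.2 _ (List.getElem_mem hm)

lemma IsPartition.antitone_getD (hμ : IsPartition μ) : Antitone (μ.getD · 0) :=
  List.pairwise_ge_iff_antitone_getD.1 hμ.1

lemma lt_length_of_getD_pos (h : 0 < μ.getD m 0) : m < μ.length := by
  by_contra hm
  rw [List.getD_eq_default _ _ (not_lt.1 hm)] at h
  exact h.false

lemma removeBox_eq_set (hμ : ∀ x ∈ μ, 0 < x) (h2 : 2 ≤ μ.getD m 0) :
    removeBox μ m = μ.set m (μ.getD m 0 - 1) := by
  refine List.filter_eq_self.2 fun a ha => ?_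
  rcases List.mem_or_eq_of_mem_set ha with ha | rfl
  · simpa using hμ a ha
  · simp only [decide_eq_true_eq]
    omega

lemma removeBox_eq_eraseIdx (hμ : ∀ x ∈ μ, 0 < x) (h1 : μ.getD m 0 = 1) :
    removeBox μ m = μ.eraseIdx m := by
  have hm := lt_length_of_getD_pos (h1 ▸ Nat.one_pos)
  have hpos : ∀ l : List ℕ, (∀ x ∈ l, 0 < x) → l.filter (fun x => decide (0 < x)) = l :=
    fun l hl => List.filter_eq_self.2 fun a ha => by simpa using hl a ha
  rw [removeBox, h1, List.set_eq_take_append_cons_drop, if_pos hm,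
    List.eraseIdx_eq_take_drop_succ, List.filter_append, List.filter_cons_of_neg (by simp),
    hpos _ fun x hx => hμ x (List.mem_of_mem_take hx),
    hpos _ fun x hx => hμ x (List.mem_of_mem_drop hx)]

lemma isPartition_removeBox_iff (hμ : IsPartition μ) (hm : m < μ.length) :
    IsPartition (removeBox μ m) ↔ μ.getD m 0 = 1 ∨ μ.getD (m + 1) 0 < μ.getD m 0 := by
  obtain h1 | h2 : μ.getD m 0 = 1 ∨ 2 ≤ μ.getD m 0 := by have := hμ.getD_pos hm; omega
  · rw [removeBox_eq_eraseIdx hμ.2 h1]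
    simp only [h1, true_or, iff_true]
    exact ⟨hμ.1.sublist (List.eraseIdx_sublist _ _),
      fun x hx => hμ.2 x ((List.eraseIdx_sublist _ _).subset hx)⟩
  rw [removeBox_eq_set hμ.2 h2, IsPartition, List.pairwise_ge_iff_antitone_getD]
  have hpos : ∀ x ∈ μ.set m (μ.getD m 0 - 1), 0 < x := fun x hx => by
    rcases List.mem_or_eq_of_mem_set hx with hx | rfl
    exacts [hμ.2 x hx, by omega]
  have hne : μ.getD m 0 ≠ 1 := by omega
  simp only [hne, false_or]
  constructor
  · rintro ⟨h, -⟩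
    have : (μ.set m (μ.getD m 0 - 1)).getD (m + 1) 0 ≤ (μ.set m (μ.getD m 0 - 1)).getD m 0 :=
      h (Nat.le_succ m)
    simp only [List.getD_set_eq_ite, hm, and_true, if_true] at this
    split_ifs at this <;> omega
  · refine fun h => ⟨antitone_nat_of_succ_le fun i => ?_, hpos⟩
    have : μ.getD (i + 1) 0 ≤ μ.getD i 0 := hμ.antitone_getD (Nat.le_succ i)
    simp only [List.getD_set_eq_ite]
    split_ifs <;> grind

-- When row `m` has length `1`, `removeBox` deletes the row; for a partition this removes the
-- box at the bottom of the first column instead, i.e. it shortens row `μ.length - 1`.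
lemma exists_getD_removeBox (hμ : IsPartition μ) (hm : m < μ.length) :
    ∃ x₀, m ≤ x₀ ∧ μ.getD x₀ 0 = μ.getD m 0 ∧
      ∀ x, (removeBox μ m).getD x 0 + (if x = x₀ then 1 else 0) = μ.getD x 0 := by
  obtain h1 | h2 : μ.getD m 0 = 1 ∨ 2 ≤ μ.getD m 0 := by have := hμ.getD_pos hm; omega
  · have hones : ∀ x, m ≤ x → x < μ.length → μ.getD x 0 = 1 := fun x hmx hx => by
      have h₁ : μ.getD x 0 ≤ μ.getD m 0 := hμ.antitone_getD hmx
      have h₂ := hμ.getD_pos hx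
      omega
    refine ⟨μ.length - 1, by omega, by rw [h1, hones _ (by omega) (by omega)], fun x => ?_⟩
    rw [removeBox_eq_eraseIdx hμ.2 h1, List.getD_eraseIdx]
    split_ifs <;> grind [List.getD_eq_default]
  · refine ⟨m, le_rfl, rfl, fun x => ?_⟩
    rw [removeBox_eq_set hμ.2 h2, List.getD_set_eq_ite]
    split_ifs <;> grind

lemma getD_removeBox_le (hμ : IsPartition μ) (hm : m < μ.length) (x : ℕ) :
    (removeBox μ m).getD x 0 ≤ μ.getD x 0 := by
  obtain ⟨x₀, -, -, h⟩ := exists_getD_removeBox hμ hm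
  have := h x
  omega

end Partition

lemma symOf_eq_minus {μ : List ℕ} {i j : ℤ} {m : ℕ} (h : RemovableJBox μ i j m) :
    symOf j (μ, i) = PMSym.minus := by
  rw [symOf, if_pos (List.any_eq_true.2 ⟨m, List.mem_range.2 h.1, decide_eq_true h⟩)]

lemma removableJBox_of_getD_removeBox_lt {μ ν : List ℕ} {i i' j : ℤ} {c m x : ℕ}
    (hμ : IsPartition μ) (hν : IsPartition ν) (hc : (c : ℤ) = i - i')
    (hle : ∀ y, μ.getD (c + y) 0 ≤ ν.getD y 0) (hR : RemovableJBox ν i' j m)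
    (hx : (removeBox ν m).getD x 0 < μ.getD (c + x) 0) : RemovableJBox μ i j (c + m) := by
  obtain ⟨hm, hcontent, hνR⟩ := hR
  obtain ⟨x₀, hmx₀, hx₀, hrem⟩ := exists_getD_removeBox hν hm
  have hxx₀ : x = x₀ := by
    by_contra hne
    have h₁ := hrem x
    rw [if_neg hne] at h₁
    exact absurd (hle x) (by omega)
  subst hxx₀
  have hrow : μ.getD (c + m) 0 = ν.getD m 0 := by
    have h₁ := hrem x
    have h₂ : μ.getD (c + x) 0 ≤ μ.getD (c + m) 0 :=
      hμ.antitone_getD (Nat.add_le_add_left hmx₀ c)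
    rw [if_pos rfl] at h₁
    exact le_antisymm (hle m) (by omega)
  have hcm : c + m < μ.length := lt_length_of_getD_pos (hrow ▸ hν.getD_pos hm)
  refine ⟨hcm, by push_cast at hcontent ⊢; omega, (isPartition_removeBox_iff hμ hcm).2 ?_⟩
  have := hle (m + 1)
  rw [hrow]
  rcases (isPartition_removeBox_iff hν hm).1 hνR with h | h
  · exact Or.inl h
  · exact Or.inr (by rw [← add_assoc] at this; omega)

lemma redIdx_cons_sublist (p : ℕ × PMSym) (xs : List (ℕ × PMSym)) :
    (redIdx (p :: xs)).Sublist (p :: redIdx xs) := by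
  obtain ⟨n, s⟩ := p
  cases s with
  | blank => exact List.sublist_cons_self _ _
  | plus => rfl
  | minus =>
    cases hr : redIdx xs with
    | nil => simp [redIdx, hr]
    | cons q r' =>
      simp only [redIdx, hr]
      split_ifs
      · exact (List.sublist_cons_self q r').trans (List.sublist_cons_self _ _)
      · rfl

lemma redIdx_sublist (l : List (ℕ × PMSym)) : (redIdx l).Sublist l := by
  induction l with
  | nil => rfl
  | cons p xs ih => exact (redIdx_cons_sublist p xs).trans (ih.cons_cons p)

lemma mem_redIdx_cons_of_mem (p : ℕ × PMSym) {xs : List (ℕ × PMSym)} {k : ℕ}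
    (h : (k, PMSym.minus) ∈ redIdx xs) : (k, PMSym.minus) ∈ redIdx (p :: xs) := by
  obtain ⟨n, s⟩ := p
  cases s with
  | blank => exact h
  | plus => exact List.mem_cons_of_mem _ h
  | minus =>
    cases hr : redIdx xs with
    | nil => simp [hr] at h
    | cons q r' =>
      rw [hr] at h
      simp only [redIdx, hr]
      split_ifs with hq
      · rcases List.mem_cons.1 h with rfl | h
        · simp at hq
        · exact h
      · exact List.mem_cons_of_mem _ h

lemma mem_redIdx_of_succ_mem_redIdx {l : List (ℕ × PMSym)} (hl : l.Pairwise (·.1 < ·.1))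
    {k : ℕ} (hk : (k, PMSym.minus) ∈ l) (hk1 : (k + 1, PMSym.minus) ∈ redIdx l) :
    (k, PMSym.minus) ∈ redIdx l := by
  induction l with
  | nil => simp at hk
  | cons p xs ih =>
    obtain ⟨hp, hxs⟩ := List.pairwise_cons.1 hl
    have hk1' : (k + 1, PMSym.minus) ∈ redIdx xs := by
      rcases List.mem_cons.1 ((redIdx_cons_sublist p xs).subset hk1) with rfl | h
      · rcases List.mem_cons.1 hk with h | h
        · simp at h
        · have := hp _ h
          simp at this
      · exact h
    rcases List.mem_cons.1 hk with rfl | hk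
    · cases hr : redIdx xs with
      | nil => simp [hr] at hk1'
      | cons q r' =>
        have hq : q.2 ≠ PMSym.plus := by
          intro hq
          have hpair := hxs.sublist (redIdx_sublist xs)
          have hkq := hp q ((redIdx_sublist xs).subset (hr ▸ List.mem_cons_self))
          rw [hr] at hpair hk1'
          rcases List.mem_cons.1 hk1' with rfl | h
          · simp at hq
          · have := (List.pairwise_cons.1 hpair).1 _ h
            simp at hkq this
            omega
        simp [redIdx, hr, hq]
    · exact mem_redIdx_cons_of_mem p (ih hxs hk hk1')

def signature (j : ℤ) (is : List ℤ) (μs : List (List ℕ)) : List (ℕ × PMSym) :=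
  ((μs.zip is).map (symOf j)).zipIdx.map Prod.swap

section Signature

variable {j : ℤ} {is : List ℤ} {μs : List (List ℕ)}

lemma signature_pairwise : (signature j is μs).Pairwise (·.1 < ·.1) := by
  have := List.pairwise_lt_range' (s := 0) (n := ((μs.zip is).map (symOf j)).length)
  rw [← List.zipIdx_map_snd 0, List.pairwise_map] at this
  exact List.pairwise_map.2 this

lemma mem_signature_iff {t : ℕ} {s : PMSym} :
    (t, s) ∈ signature j is μs ↔
      t < μs.length ∧ t < is.length ∧ symOf j (μs.getD t [], is.getD t 0) = s := by
  rw [signature, List.mem_map_swap, List.mem_zipIdx_iff_getElem?]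
  by_cases ht : t < μs.length ∧ t < is.length
  · rw [List.getElem?_map, List.getElem?_eq_getElem (by simpa using ht)]
    simp [ht]
  · rw [List.getElem?_map, List.getElem?_eq_none (by simp; omega)]
    simp only [Option.map_none, reduceCtorEq, false_iff]
    tauto

end Signature

lemma exists_removableJBox_of_EjPart_eq_some {i j : ℤ} {μ ν : List ℕ}
    (h : EjPart i j μ = some ν) : ∃ m, RemovableJBox μ i j m ∧ ν = removeBox μ m := by
  unfold EjPart at h
  split at h
  · cases h
  · rename_i m hm
    exact ⟨m, by simpa using List.find?_some hm, (Option.some.inj h).symm⟩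

lemma exists_of_EjMP_eq_some {j : ℤ} {is : List ℤ} {μs μs' : List (List ℕ)}
    (h : EjMP j is μs = some μs') :
    ∃ k m, k < is.length ∧ RemovableJBox (μs.getD k []) (is.getD k 0) j m ∧
      μs' = μs.set k (removeBox (μs.getD k []) m) ∧
      ∀ t, t + 1 = k → symOf j (μs.getD t [], is.getD t 0) ≠ PMSym.minus := by
  unfold EjMP at h
  split at h
  · cases h
  rename_i p hp
  replace hp : (redIdx (signature j is μs)).find? (fun p => p.2 == PMSym.minus) = some p := hp
  split at h
  · cases h
  rename_i ν hν
  obtain ⟨m, hR, rfl⟩ := exists_removableJBox_of_EjPart_eq_some hν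
  obtain ⟨k, s⟩ := p
  obtain rfl : s = PMSym.minus := by simpa using List.find?_some hp
  have hk := mem_signature_iff.1 ((redIdx_sublist _).subset (List.mem_of_find?_eq_some hp))
  refine ⟨k, m, hk.2.1, hR, (Option.some.inj h).symm, ?_⟩
  rintro t rfl hsym
  have ht : (t, PMSym.minus) ∈ signature j is μs :=
    mem_signature_iff.2 ⟨by omega, by omega, hsym⟩
  have := List.le_of_find?_eq_some (f := Prod.fst) (signature_pairwise.sublist (redIdx_sublist _))
    hp (mem_redIdx_of_succ_mem_redIdx signature_pairwise ht
      (List.mem_of_find?_eq_some hp)) rfl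
  simp at this

theorem stmt13_general (j : ℤ) (is : List ℤ) (μs μs' : List (List ℕ))
    (hdec : is.Pairwise (· ≥ ·))
    (hpart : ∀ μ ∈ μs, IsPartition μ) (hK : Kleshchev is μs)
    (h : EjMP j is μs = some μs') :
    (∀ μ ∈ μs', IsPartition μ) ∧ Kleshchev is μs' := by
  obtain ⟨k, m, hk, hR, rfl, hleft⟩ := exists_of_EjMP_eq_some h
  have hpartD : ∀ t < μs.length, IsPartition (μs.getD t []) := fun t ht => by
    rw [List.getD_eq_getElem _ _ ht]
    exact hpart _ (List.getElem_mem ht)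
  refine ⟨fun μ hμ => ?_, fun t ht x => ?_⟩
  · rcases List.mem_or_eq_of_mem_set hμ with hμ | rfl
    exacts [hpart μ hμ, hR.2.2]
  rw [List.length_set] at ht
  simp only [List.getD_set_eq_ite]
  split_ifs with hkt hkt1 hkt1
  · omega
  · obtain ⟨rfl, -⟩ := hkt
    exact (getD_removeBox_le (hpartD k (by omega)) hR.1 _).trans (hK k ht x)
  · obtain ⟨rfl, -⟩ := hkt1
    have hc : ((is.getD t 0 - is.getD (t + 1) 0).toNat : ℤ) =
        is.getD t 0 - is.getD (t + 1) 0 := by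
      refine Int.toNat_of_nonneg (sub_nonneg.2 ?_)
      rw [List.getD_eq_getElem _ _ hk, List.getD_eq_getElem _ _ (by omega)]
      exact List.pairwise_iff_getElem.1 hdec t (t + 1) _ _ (by omega)
    by_contra hlt
    exact hleft t rfl (symOf_eq_minus (removableJBox_of_getD_removeBox_lt (hpartD t (by omega))
      (hpartD _ ht) hc (hK t ht) hR (not_le.1 hlt)))
  · exact hK t ht x

/-- If `(μ^{(1)}, …, μ^{(r)})` is a Kleshchev multipartition colored by
`λ = Λ_{i₁} + ⋯ + Λ_{i_r}` with `i₁ ≥ ⋯ ≥ i_r`, and `E_j` of this colored multipartition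
is nonzero, then the result is again a Kleshchev multipartition. -/
theorem stmt13 (j : ℤ) (is : List ℤ) (μs μs' : List (List ℕ))
    (hlen : μs.length = is.length) (hdec : is.Pairwise (· ≥ ·))
    (hpart : ∀ μ ∈ μs, IsPartition μ) (hK : Kleshchev is μs)
    (h : EjMP j is μs = some μs') :
    (∀ μ ∈ μs', IsPartition μ) ∧ Kleshchev is μs' :=
  stmt13_general j is μs μs' hdec hpart hK h
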